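/- Let G be a simple graph, let R ⊆ V(G) be such that the induced subgraph G[R] is connected and nonempty, and let u ∈ N[R] and v ∈ N(R) be distinct vertices such that v has at least one neighbor in R \ {u}. Then there exists a path in G from u to v of length at least two all of whose internal vertices lie in R. -/

import Mathlib

open SimpleGraph

theorem stmt_10 {V : Type*} (G : SimpleGraph V) (R : Set V)
    (hconn : (G.induce R).Connected)
    (u v : V) (huv : u ≠ v)
    (hu : u ∈ R ∨ ∃ y ∈ R, G.Adj u y)
    (hv : v ∉ R ∧ ∃ y ∈ R, G.Adj v y)
    (hv' : ∃ y ∈ R, y ≠ u ∧ G.Adj v y) :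
    ∃ p : G.Walk u v, p.IsPath ∧ 2 ≤ p.length ∧
      ∀ x ∈ p.support, x ≠ u → x ≠ v → x ∈ R := by
  classical
  obtain ⟨hvR, -⟩ := hv
  obtain ⟨y, hyR, hyu, hvy⟩ := hv'
  let f : (G.induce R) →g G := SimpleGraph.Hom.comap Subtype.val G
  have hfinj : Function.Injective f := Subtype.val_injective
  by_cases huR : u ∈ R
  · obtain ⟨q0⟩ := hconn ⟨u, huR⟩ ⟨y, hyR⟩
    set q : (G.induce R).Walk ⟨u, huR⟩ ⟨y, hyR⟩ := q0.toPath.1 with hq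
    have hqpath : q.IsPath := q0.toPath.2
    have hmpath : (q.map f).IsPath := SimpleGraph.Walk.map_isPath_of_injective hfinj hqpath
    have hsubR : ∀ x ∈ (q.map f).support, x ∈ R := by
      intro x hx
      rw [SimpleGraph.Walk.support_map, List.mem_map] at hx
      obtain ⟨a, -, rfl⟩ := hx
      exact a.2
    have hvns : v ∉ (q.map f).support := fun h => hvR (hsubR v h)
    refine ⟨(q.map f).concat hvy.symm, ?_, ?_, ?_⟩
    · erw [SimpleGraph.Walk.isPath_def, SimpleGraph.Walk.support_concat,
        List.nodup_append]
      exact ⟨hmpath.support_nodup, List.nodup_singleton v,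
        by intro a ha b hb; simp only [List.mem_singleton] at hb; subst hb; exact fun h => hvns (h ▸ ha)⟩
    · erw [SimpleGraph.Walk.length_concat]
      have : q.length ≠ 0 := by
        intro h
        exact hyu (congrArg Subtype.val (SimpleGraph.Walk.eq_of_length_eq_zero h)).symm
      have : (q.map f).length ≠ 0 := by
        rwa [SimpleGraph.Walk.length_map]
      exact Nat.succ_le_succ (Nat.one_le_iff_ne_zero.mpr this)
    · intro x hx hxu hxv
      erw [SimpleGraph.Walk.support_concat, List.mem_append] at hx
      rcases hx with hx | hx
      · exact hsubR x hx
      · simp at hx; exact absurd hx hxv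
  · obtain huR' | ⟨y', hy'R, huy'⟩ := hu
    · exact absurd huR' huR
    obtain ⟨q0⟩ := hconn ⟨y', hy'R⟩ ⟨y, hyR⟩
    set q : (G.induce R).Walk ⟨y', hy'R⟩ ⟨y, hyR⟩ := q0.toPath.1 with hq
    have hqpath : q.IsPath := q0.toPath.2
    have hmpath : (q.map f).IsPath := SimpleGraph.Walk.map_isPath_of_injective hfinj hqpath
    have hsubR : ∀ x ∈ (q.map f).support, x ∈ R := by
      intro x hx
      rw [SimpleGraph.Walk.support_map, List.mem_map] at hx
      obtain ⟨a, -, rfl⟩ := hx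
      exact a.2
    have hvns : v ∉ (q.map f).support := fun h => hvR (hsubR v h)
    have huns : u ∉ (q.map f).support := fun h => huR (hsubR u h)
    refine ⟨SimpleGraph.Walk.cons huy' ((q.map f).concat hvy.symm), ?_, ?_, ?_⟩
    · erw [SimpleGraph.Walk.isPath_def, SimpleGraph.Walk.support_cons,
        List.nodup_cons, SimpleGraph.Walk.support_concat,
        List.nodup_append]
      refine ⟨?_, hmpath.support_nodup, List.nodup_singleton v,
        by intro a ha b hb; simp only [List.mem_singleton] at hb; subst hb; exact fun h => hvns (h ▸ ha)⟩
      rw [List.mem_append]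
      rintro (h | h)
      · exact huns h
      · simp at h; exact huv h
    · erw [SimpleGraph.Walk.length_cons, SimpleGraph.Walk.length_concat]; omega
    · intro x hx hxu hxv
      erw [SimpleGraph.Walk.support_cons, List.mem_cons] at hx
      rcases hx with rfl | hx
      · exact absurd rfl hxu
      erw [SimpleGraph.Walk.support_concat, List.mem_append] at hx
      rcases hx with hx | hx
      · exact hsubR x hx
      · simp at hx; exact absurd hx hxv
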